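/- For every optimiser a and every index i ∈ {1, …, n}, there is exactly one needle-in-a-haystack function f with M_ptm(T^y(a,f)) = i; equivalently, under the uniform NIAH distribution the optimisation time of a equals i with probability exactly 1/n for each i. -/

import Mathlib

namespace NFL

/-- A (deterministic) optimiser on search space `Fin n` and range `Y`:
it assigns to every trace (list of pairs with pairwise distinct first
components) of length `< n` a next, unvisited search point. -/
structure Optimiser (n : ℕ) (Y : Type*) where
  next : List (Fin n × Y) → Fin n
  valid : ∀ T : List (Fin n × Y), T.length < n → (T.map Prod.fst).Nodup →
    next T ∉ T.map Prod.fst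

variable {n : ℕ} {Y : Type*}

/-- The trace generated after `k` steps by running optimiser `a`
on target function `f`, starting from the empty trace. -/
def runFrom (a : Optimiser n Y) (f : Fin n → Y) : ℕ → List (Fin n × Y)
  | 0 => []
  | k + 1 =>
      runFrom a f k ++ [(a.next (runFrom a f k), f (a.next (runFrom a f k)))]

/-- The result vector `T^y(a,f)`: its `i`-th entry (0-indexed) is the value
observed at step `i+1`, i.e. `f` applied to the point probed after `i` steps. -/
def resVec (a : Optimiser n Y) (f : Fin n → Y) (i : Fin n) : Y :=
  f (a.next (runFrom a f (i : ℕ)))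

/-- A problem distribution: a probability distribution on `Y^X`. -/
def IsProbDist [Fintype Y] (P : (Fin n → Y) → ℝ) : Prop :=
  (∀ f, 0 ≤ P f) ∧ ∑ f, P f = 1

/-- `P_a(R)`: the probability that optimiser `a` produces result vector `R`. -/
def resProb [Fintype Y] [DecidableEq Y] (P : (Fin n → Y) → ℝ)
    (a : Optimiser n Y) (R : Fin n → Y) : ℝ :=
  ∑ f ∈ Finset.univ.filter (fun f => resVec a f = R), P f

/-- Expected performance `M^P(a)` of optimiser `a` under distribution `P`
and performance measure `M`. -/
def perf [Fintype Y] (P : (Fin n → Y) → ℝ) (M : (Fin n → Y) → ℝ)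
    (a : Optimiser n Y) : ℝ :=
  ∑ f, P f * M (resVec a f)

/-- NFL holds for `P`: all optimisers have the same expected performance
under every (nonnegative) performance measure. -/
def NFLholds [Fintype Y] (P : (Fin n → Y) → ℝ) : Prop :=
  ∀ M : (Fin n → Y) → ℝ, (∀ R, 0 ≤ M R) →
    ∀ a b : Optimiser n Y, perf P M a = perf P M b

/-- The histogram of `f`: `h_f(y) = |f⁻¹(y)|`. -/
def histogram [DecidableEq Y] (f : Fin n → Y) (y : Y) : ℕ :=
  (Finset.univ.filter fun x => f x = y).card

/-- `P` is block uniform: functions with equal histograms get equal probability. -/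
def BlockUniform [DecidableEq Y] (P : (Fin n → Y) → ℝ) : Prop :=
  ∀ f g : Fin n → Y, histogram f = histogram g → P f = P g

/-- `F` is closed under permutation: `f ∈ F` implies `σf ∈ F`,
where `(σf)(x) = f(σ⁻¹(x))`. -/
def Cup [Fintype Y] [DecidableEq Y] (F : Finset (Fin n → Y)) : Prop :=
  ∀ f ∈ F, ∀ σ : Equiv.Perm (Fin n), (f ∘ σ.symm) ∈ F

/-- The uniform distribution on a class `F`. -/
noncomputable def uniformOn [Fintype Y] [DecidableEq Y] (F : Finset (Fin n → Y))
    (f : Fin n → Y) : ℝ :=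
  if f ∈ F then 1 / F.card else 0

/-- An optimiser is non-adaptive if it probes the points of `X` in a fixed
order, regardless of the observed values. -/
def NonAdaptive (a : Optimiser n Y) : Prop :=
  ∃ ord : Fin n → Fin n,
    ∀ (f : Fin n → Y) (i : Fin n), a.next (runFrom a f (i : ℕ)) = ord i

/-- Optimisation time `M_ptm(R)`: the least index `i` (counting from 1) with
`R[i] = yMax`, with the convention `M_ptm(R) = n` if no such index exists. -/
def mptm [DecidableEq Y] (yMax : Y) (R : Fin n → Y) : ℕ :=
  if h : ∃ i, R i = yMax then
    ((Finset.univ.filter fun i => R i = yMax).min'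
      ⟨h.choose, Finset.mem_filter.mpr ⟨Finset.mem_univ _, h.choose_spec⟩⟩).val + 1
  else n

/-!
Let `π k` be the point probed at step `k` on the constant-`false` function. A run on a
needle-in-a-haystack function sees only `false` until it hits the needle, so it follows the same
trace; hence the needle at `π k` is found exactly at step `k + 1`. Since `π` is a permutation of
`X`, the needle functions correspond bijectively to the optimisation times `1, …, n`.
-/

def probe (a : Optimiser n Y) (f : Fin n → Y) (k : ℕ) : Fin n :=
  a.next (runFrom a f k)

def needle {α : Type*} [DecidableEq α] (x : α) : α → Bool :=
  fun y => decide (y = x)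

section Run

variable (a : Optimiser n Y) (f : Fin n → Y)

lemma runFrom_succ (k : ℕ) :
    runFrom a f (k + 1) = runFrom a f k ++ [(probe a f k, f (probe a f k))] :=
  rfl

lemma resVec_eq_probe (i : Fin n) : resVec a f i = f (probe a f i) :=
  rfl

lemma length_runFrom (k : ℕ) : (runFrom a f k).length = k := by
  induction k with
  | zero => rfl
  | succ k ih => simp [runFrom_succ, ih]

lemma map_fst_runFrom (k : ℕ) :
    (runFrom a f k).map Prod.fst = (List.range k).map (probe a f) := by
  induction k with
  | zero => rfl
  | succ k ih => simp [runFrom_succ, ih, List.range_succ]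

lemma nodup_map_fst_runFrom {k : ℕ} (hk : k ≤ n) : ((runFrom a f k).map Prod.fst).Nodup := by
  induction k with
  | zero => simp [runFrom]
  | succ k ih =>
    have hnodup := ih (by omega)
    have hfresh := a.valid _ (by rw [length_runFrom]; omega) hnodup
    rw [runFrom_succ, List.map_append, List.nodup_append]
    refine ⟨hnodup, List.nodup_singleton _, fun x hx y hy hxy => hfresh ?_⟩
    rwa [hxy, List.mem_singleton.1 hy] at hx

lemma probe_injective : Function.Injective fun k : Fin n => probe a f k := by
  intro j k hjk
  have hnodup := nodup_map_fst_runFrom a f le_rfl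
  rw [map_fst_runFrom] at hnodup
  exact Fin.ext (List.inj_on_of_nodup_map hnodup (by simp) (by simp) hjk)

end Run

lemma runFrom_congr (a : Optimiser n Y) {f g : Fin n → Y} {k : ℕ}
    (h : ∀ j < k, f (probe a g j) = g (probe a g j)) : runFrom a f k = runFrom a g k := by
  induction k with
  | zero => rfl
  | succ k ih =>
    have hrun := ih fun j hj => h j (by omega)
    have hprobe : probe a f k = probe a g k := congrArg a.next hrun
    rw [runFrom_succ, runFrom_succ, hrun, hprobe, h k (by omega)]

lemma resVec_needle (a : Optimiser n Bool) (k : Fin n) :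
    resVec a (needle (probe a (fun _ => false) k)) = needle k := by
  set g : Fin n → Bool := fun _ => false
  set f := needle (probe a g k)
  have hinj := probe_injective a g
  have hprobe : ∀ j : Fin n, j ≤ k → probe a f j = probe a g j := fun j hj =>
    congrArg a.next <| runFrom_congr a fun m hm => by
      have hmk : (⟨m, by omega⟩ : Fin n) ≠ k := ((Fin.mk_lt_of_lt_val hm).trans_le hj).ne
      simpa [f, g, needle] using mt (@hinj ⟨m, _⟩ k) hmk
  funext j
  rcases le_or_gt j k with hjk | hkj
  · rw [resVec_eq_probe, hprobe j hjk]
    simp only [f, needle, hinj.eq_iff]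
  · have hne : probe a f j ≠ probe a g k := by
      rw [← hprobe k le_rfl]
      exact fun h => hkj.ne' ((probe_injective a f) h)
    rw [resVec_eq_probe]
    simp [f, needle, hne, hkj.ne']

lemma mptm_needle (k : Fin n) : mptm true (needle k) = k + 1 := by
  have hex : ∃ j, needle k j = true := ⟨k, by simp [needle]⟩
  have hfilter : (Finset.univ.filter fun j => needle k j = true) = {k} := by
    ext j
    simp [needle]
  simp only [mptm, dif_pos hex, hfilter, Finset.min'_singleton]

lemma card_filter_eq_one_iff_eq_needle {α : Type*} [Fintype α] [DecidableEq α] (f : α → Bool) :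
    (Finset.univ.filter fun x => f x = true).card = 1 ↔ ∃ x, f = needle x := by
  rw [Finset.card_eq_one]
  refine exists_congr fun x => ⟨fun h => funext fun y => ?_, fun h => ?_⟩
  · have := congrArg (y ∈ ·) h
    simp only [Finset.mem_filter, Finset.mem_univ, true_and, Finset.mem_singleton] at this
    cases hy : f y <;> simp_all [needle]
  · ext y
    simp [h, needle]

theorem niah_unique_optimisation_time_general {n : ℕ}
    (a : Optimiser n Bool) (i : ℕ) (hi1 : 1 ≤ i) (hin : i ≤ n) :
    ∃! f : Fin n → Bool,
      (Finset.univ.filter fun x => f x = true).card = 1 ∧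
        mptm true (resVec a f) = i := by
  let π := fun k : Fin n => probe a (fun _ => false) k
  have hπ : Function.Bijective π := (probe_injective a _).bijective_of_finite
  let k₀ : Fin n := ⟨i - 1, by omega⟩
  refine ⟨needle (π k₀), ⟨(card_filter_eq_one_iff_eq_needle _).2 ⟨_, rfl⟩, ?_⟩, ?_⟩
  · rw [resVec_needle, mptm_needle]
    simp only [k₀]
    omega
  rintro f ⟨hcard, hf⟩
  obtain ⟨x, rfl⟩ := (card_filter_eq_one_iff_eq_needle f).1 hcard
  obtain ⟨k, rfl⟩ := hπ.2 x
  rw [resVec_needle, mptm_needle] at hf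
  have hk : k = k₀ := Fin.ext (by simp only [k₀]; omega)
  rw [hk]

theorem niah_unique_optimisation_time {n : ℕ} (hn : 1 ≤ n)
    (a : Optimiser n Bool) (i : ℕ) (hi1 : 1 ≤ i) (hin : i ≤ n) :
    ∃! f : Fin n → Bool,
      (Finset.univ.filter fun x => f x = true).card = 1 ∧
        mptm true (resVec a f) = i :=
  niah_unique_optimisation_time_general a i hi1 hin

end NFL
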